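/- Upper bound for Bowen entropy of a product of two different systems: let (X_1,d_1,T_1) and (X_2,d_2,T_2) be topological dynamical systems. For any Z_1 ⊆ X_1 and Z_2 ⊆ X_2, h^B(Z_1 × Z_2) ≤ h^B(Z_1) + h^P(Z_2), where the product is taken in the system (X_1×X_2, ρ, T_1×T_2). -/

import Mathlib

/-!
Take `s > h^B(Z₁)` and `t > h^P(Z₂)`, fix `ε`, and split `Z₂` into countably many pieces `Yᵢ` with
`P^t_{ε/3}(Yᵢ) < 1`. For all large `n`, a maximal family of pairwise disjoint closed Bowen balls
`B̄ₙ(y, ε/3)` centred in `Yᵢ` then has at most `e^{tn}` members, and by maximality the balls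
`Bₙ(y, ε)` around its centres cover `Yᵢ`. Pairing each ball `Bₙ(x, ε)` of a cheap cover of `Z₁`
with these balls covers `Z₁ × Yᵢ` by product Bowen balls at cost
`Σ e^{tn} e^{-(s+t)n} = Σ e^{-sn}`, which can be made arbitrarily small.
Hence `M^{s+t}(Z₁ × Z₂) = 0`.
-/

open Filter Set
open scoped ENNReal NNReal

namespace BowenProduct

variable {X : Type*} [PseudoMetricSpace X]

/-- The open Bowen ball of order `n` and radius `ε` around `x`:
the ball for the `n`-th Bowen metric `d_n(x,y) = max_{0 ≤ k ≤ n-1} d(T^k x, T^k y)`. -/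
def bowenBall (T : X → X) (n : ℕ) (x : X) (ε : ℝ) : Set X :=
  {y | ∀ k < n, dist (T^[k] x) (T^[k] y) < ε}

/-- The closed Bowen ball of order `n` and radius `ε` around `x`. -/
def bowenClosedBall (T : X → X) (n : ℕ) (x : X) (ε : ℝ) : Set X :=
  {y | ∀ k < n, dist (T^[k] x) (T^[k] y) ≤ ε}

/-- `M^s_{N,ε}(Z)`: the infimum of `Σ_i exp(-s n_i)` over all finite or countable families
`{B_{n_i}(x_i, ε)}` with `x_i ∈ X`, `n_i ≥ N`, covering `Z`. -/
noncomputable def coverSum (T : X → X) (s : ℝ) (N : ℕ) (ε : ℝ) (Z : Set X) : ℝ≥0∞ :=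
  ⨅ (F : Set (X × ℕ)) (_ : F.Countable) (_ : ∀ p ∈ F, N ≤ p.2)
    (_ : Z ⊆ ⋃ p ∈ F, bowenBall T p.2 p.1 ε),
    ∑' p : F, ENNReal.ofReal (Real.exp (-s * ((p : X × ℕ).2 : ℝ)))

/-- `M^s_ε(Z) = lim_{N → ∞} M^s_{N,ε}(Z)`; the limit exists and equals the supremum
since `M^s_{N,ε}(Z)` does not decrease as `N` increases. -/
noncomputable def coverMeasureEps (T : X → X) (s ε : ℝ) (Z : Set X) : ℝ≥0∞ :=
  ⨆ N : ℕ, coverSum T s N ε Z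

/-- `M^s(Z) = lim_{ε → 0} M^s_ε(Z)`; the limit exists and equals the supremum
since `M^s_ε(Z)` does not decrease as `ε` decreases. -/
noncomputable def coverMeasure (T : X → X) (s : ℝ) (Z : Set X) : ℝ≥0∞ :=
  ⨆ (ε : ℝ) (_ : 0 < ε), coverMeasureEps T s ε Z

/-- Bowen's topological entropy `h^B(Z)`: the critical value of `s ≥ 0` at which
`M^s(Z)` jumps from `∞` to `0`, i.e. `inf {s ≥ 0 : M^s(Z) = 0}` (and `∞` if no such `s`). -/
noncomputable def bowenEntropy (T : X → X) (Z : Set X) : ℝ≥0∞ :=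
  ⨅ (s : ℝ≥0) (_ : coverMeasure T (s : ℝ) Z = 0), (s : ℝ≥0∞)

/-- `P^s_{N,ε}(Z)`: the supremum of `Σ_i exp(-s n_i)` over all finite or countable pairwise
disjoint families `{B̄_{n_i}(x_i, ε)}` with `x_i ∈ Z`, `n_i ≥ N`. -/
noncomputable def packingSum (T : X → X) (s : ℝ) (N : ℕ) (ε : ℝ) (Z : Set X) : ℝ≥0∞ :=
  ⨆ (F : Set (X × ℕ)) (_ : F.Countable) (_ : ∀ p ∈ F, p.1 ∈ Z ∧ N ≤ p.2)
    (_ : F.PairwiseDisjoint fun p => bowenClosedBall T p.2 p.1 ε),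
    ∑' p : F, ENNReal.ofReal (Real.exp (-s * ((p : X × ℕ).2 : ℝ)))

/-- `P^s_ε(Z) = lim_{N → ∞} P^s_{N,ε}(Z)`; the limit exists and equals the infimum
since `P^s_{N,ε}(Z)` does not increase as `N` increases. -/
noncomputable def packingPre (T : X → X) (s ε : ℝ) (Z : Set X) : ℝ≥0∞ :=
  ⨅ N : ℕ, packingSum T s N ε Z

/-- `𝒫^s_ε(Z) = inf { Σ_{i=1}^∞ P^s_ε(Z_i) : ∪_{i=1}^∞ Z_i ⊇ Z }`. -/
noncomputable def packingMeasureEps (T : X → X) (s ε : ℝ) (Z : Set X) : ℝ≥0∞ :=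
  ⨅ (Zs : ℕ → Set X) (_ : Z ⊆ ⋃ i, Zs i), ∑' i, packingPre T s ε (Zs i)

/-- `h^P(Z, ε)`: the critical value of `s ≥ 0` at which `𝒫^s_ε(Z)` jumps from `∞` to `0`. -/
noncomputable def packingEntropyEps (T : X → X) (ε : ℝ) (Z : Set X) : ℝ≥0∞ :=
  ⨅ (s : ℝ≥0) (_ : packingMeasureEps T (s : ℝ) ε Z = 0), (s : ℝ≥0∞)

/-- The packing topological entropy `h^P(Z) = lim_{ε → 0} h^P(Z, ε)`; the limit exists and
equals the supremum since `h^P(Z,ε)` increases as `ε` decreases. -/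
noncomputable def packingEntropy (T : X → X) (Z : Set X) : ℝ≥0∞ :=
  ⨆ (ε : ℝ) (_ : 0 < ε), packingEntropyEps T ε Z

/-- `r_n(Z, ε)`: the largest cardinality of an `(n,ε)`-separated subset `E ⊆ Z`, i.e. a set in
which distinct points are at Bowen `d_n`-distance `> ε`. -/
noncomputable def maxSep (T : X → X) (Z : Set X) (n : ℕ) (ε : ℝ) : ℕ :=
  sSup {k : ℕ | ∃ E : Finset X, ↑E ⊆ Z ∧
    (∀ x ∈ E, ∀ y ∈ E, x ≠ y → ∃ i < n, ε < dist (T^[i] x) (T^[i] y)) ∧ E.card = k}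

/-- The upper capacity topological entropy
`h^U(Z) = lim_{ε → 0} limsup_{n → ∞} (1/n) log r_n(Z, ε)`; the limit over `ε` equals the
supremum by monotonicity. -/
noncomputable def upperCapacityEntropy (T : X → X) (Z : Set X) : ℝ≥0∞ :=
  ⨆ (ε : ℝ) (_ : 0 < ε),
    Filter.atTop.limsup fun n : ℕ => ENNReal.ofReal (Real.log (maxSep T Z n ε) / n)

end BowenProduct

lemma ENNReal.le_add_of_forall_coe_lt {a b c : ℝ≥0∞}
    (h : ∀ s t : ℝ≥0, b < s → c < t → a ≤ s + t) : a ≤ b + c := by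
  refine ENNReal.le_of_forall_pos_le_add fun δ hδ hbc => ?_
  lift b to ℝ≥0 using (le_self_add.trans_lt hbc).ne
  lift c to ℝ≥0 using (le_add_self.trans_lt hbc).ne
  have hδ₂ : 0 < δ / 2 := half_pos hδ
  calc a ≤ ↑(b + δ / 2) + ↑(c + δ / 2) :=
        h _ _ (by exact_mod_cast lt_add_of_pos_right b hδ₂)
          (by exact_mod_cast lt_add_of_pos_right c hδ₂)
    _ = ↑(b + c + δ) := by rw [← ENNReal.coe_add]; congr 1; ring
    _ = ↑b + ↑c + ↑δ := by push_cast; rfl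

lemma Antitone.apply_eq_zero_of_iInf_lt {f : ℝ → ℝ≥0∞} (hf : Antitone f) {t : ℝ≥0}
    (h : ⨅ (s : ℝ≥0) (_ : f s = 0), (s : ℝ≥0∞) < t) : f t = 0 := by
  simp only [iInf_lt_iff, exists_prop] at h
  obtain ⟨s, hs, hst⟩ := h
  exact nonpos_iff_eq_zero.1 ((hf (by exact_mod_cast hst.le)).trans hs.le)

lemma Finset.exists_max_card_of_bdd {α : Type*} {P : Finset α → Prop} {E₀ : Finset α}
    (h₀ : P E₀) {K : ℕ} (hK : ∀ E, P E → E.card ≤ K) :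
    ∃ E, P E ∧ ∀ E', P E' → E'.card ≤ E.card := by
  classical
  obtain ⟨E, hE, hcard⟩ :=
    Nat.findGreatest_spec (P := fun k => ∃ E, P E ∧ E.card = k) (hK E₀ h₀) ⟨E₀, h₀, rfl⟩
  exact ⟨E, hE, fun E' hE' => hcard ▸ Nat.le_findGreatest (hK E' hE') ⟨E', hE', rfl⟩⟩

lemma tsum_image_finset_of_forall_eq {α β M : Type*} [AddCommMonoid M] [TopologicalSpace M]
    {g : α → β} {E : Finset α} (hg : InjOn g E) (f : β → M) {c : M}
    (hf : ∀ y ∈ E, f (g y) = c) : ∑' q : g '' E, f q = E.card • c := by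
  rw [tsum_image f hg, Finset.tsum_subtype' E fun y => f (g y), Finset.sum_congr rfl hf,
    Finset.sum_const]

namespace BowenProduct

lemma ofReal_exp_neg_mul_antitone (n : ℕ) :
    Antitone fun s : ℝ => ENNReal.ofReal (Real.exp (-s * n)) := fun s s' h => by
  dsimp only
  gcongr

lemma ofReal_exp_neg_add_mul (s t : ℝ) (n : ℕ) :
    ENNReal.ofReal (Real.exp (-(s + t) * n)) =
      ENNReal.ofReal (Real.exp (-t * n)) * ENNReal.ofReal (Real.exp (-s * n)) := by
  rw [← ENNReal.ofReal_mul (Real.exp_nonneg _), ← Real.exp_add]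
  ring_nf

section BowenBalls

variable {X : Type*} [PseudoMetricSpace X] {T : X → X} {n : ℕ} {x y : X} {ε δ : ℝ}

lemma mem_bowenClosedBall_self (hε : 0 ≤ ε) : x ∈ bowenClosedBall T n x ε :=
  fun k _ => by simpa using hε

lemma bowenClosedBall_subset_bowenBall (h : ε < δ) :
    bowenClosedBall T n x ε ⊆ bowenBall T n x δ :=
  fun _ hy k hk => (hy k hk).trans_lt h

lemma mem_bowenClosedBall_two_mul_of_not_disjoint
    (h : ¬Disjoint (bowenClosedBall T n x ε) (bowenClosedBall T n y ε)) :
    y ∈ bowenClosedBall T n x (2 * ε) := by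
  obtain ⟨w, hxw, hyw⟩ := not_disjoint_iff.1 h
  intro k hk
  calc dist (T^[k] x) (T^[k] y) ≤ dist (T^[k] x) (T^[k] w) + dist (T^[k] y) (T^[k] w) :=
        dist_triangle_right _ _ _
    _ ≤ 2 * ε := by linarith [hxw k hk, hyw k hk]

lemma bowenBall_prodMap {Y : Type*} [PseudoMetricSpace Y] (S : Y → Y) (y : Y) :
    bowenBall (Prod.map T S) n (x, y) ε = bowenBall T n x ε ×ˢ bowenBall S n y ε := by
  ext ⟨x', y'⟩
  simp only [bowenBall, mem_ofPred_eq, mem_prod, Prod.map_iterate, Prod.map_apply, Prod.dist_eq,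
    max_lt_iff, imp_and, forall_and]

end BowenBalls

section CoverSum

variable {X : Type*} [PseudoMetricSpace X] {T : X → X} {s : ℝ} {N : ℕ} {ε : ℝ} {Z Z' : Set X}

lemma coverSum_le_tsum {F : Set (X × ℕ)} (hF : F.Countable) (hFN : ∀ p ∈ F, N ≤ p.2)
    (hFZ : Z ⊆ ⋃ p ∈ F, bowenBall T p.2 p.1 ε) :
    coverSum T s N ε Z ≤ ∑' p : F, ENNReal.ofReal (Real.exp (-s * ((p : X × ℕ).2 : ℝ))) :=
  iInf₂_le_of_le F hF <| iInf₂_le_of_le hFN hFZ le_rfl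

lemma exists_cover_of_coverSum_lt {r : ℝ≥0∞} (h : coverSum T s N ε Z < r) :
    ∃ F : Set (X × ℕ), F.Countable ∧ (∀ p ∈ F, N ≤ p.2) ∧
      Z ⊆ (⋃ p ∈ F, bowenBall T p.2 p.1 ε) ∧
      ∑' p : F, ENNReal.ofReal (Real.exp (-s * ((p : X × ℕ).2 : ℝ))) < r := by
  simpa only [coverSum, iInf_lt_iff, exists_prop] using h

lemma coverSum_mono (h : Z ⊆ Z') : coverSum T s N ε Z ≤ coverSum T s N ε Z' :=
  iInf_mono fun _ => iInf_mono fun _ => iInf_mono fun _ =>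
    iInf_mono' fun hZ' => ⟨h.trans hZ', le_rfl⟩

lemma coverSum_iUnion_le (A : ℕ → Set X) :
    coverSum T s N ε (⋃ i, A i) ≤ ∑' i, coverSum T s N ε (A i) := by
  refine ENNReal.le_of_forall_pos_le_add fun η hη hfin => ?_
  obtain ⟨δ, hδ, hδη⟩ := ENNReal.exists_pos_sum_of_countable (ENNReal.coe_ne_zero.2 hη.ne') ℕ
  have hcov : ∀ i, coverSum T s N ε (A i) < coverSum T s N ε (A i) + δ i := fun i =>
    ENNReal.lt_add_right (ENNReal.le_tsum i |>.trans_lt hfin).ne (by simpa using (hδ i).ne')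
  choose F hF hFN hFA hFsum using fun i => exists_cover_of_coverSum_lt (hcov i)
  have hcover : ⋃ i, A i ⊆ ⋃ p ∈ ⋃ i, F i, bowenBall T p.2 p.1 ε := by
    simp only [biUnion_iUnion]
    exact iUnion_mono fun i => hFA i
  calc coverSum T s N ε (⋃ i, A i)
      ≤ ∑' p : ⋃ i, F i, ENNReal.ofReal (Real.exp (-s * ((p : X × ℕ).2 : ℝ))) :=
        coverSum_le_tsum (countable_iUnion hF)
          (fun p hp => (mem_iUnion.1 hp).elim fun i hi => hFN i p hi) hcover
    _ ≤ ∑' i, ∑' p : F i, ENNReal.ofReal (Real.exp (-s * ((p : X × ℕ).2 : ℝ))) :=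
        ENNReal.tsum_iUnion_le_tsum (fun p : X × ℕ => ENNReal.ofReal (Real.exp (-s * p.2))) F
    _ ≤ ∑' i, (coverSum T s N ε (A i) + δ i) := ENNReal.tsum_le_tsum fun i => (hFsum i).le
    _ ≤ ∑' i, coverSum T s N ε (A i) + η := by
        rw [ENNReal.tsum_add]; gcongr

lemma coverMeasure_antitone (T : X → X) (Z : Set X) : Antitone fun s => coverMeasure T s Z :=
  fun _ _ h => iSup₂_mono fun _ _ => iSup_mono fun _ =>
    iInf₂_mono fun _ _ => iInf₂_mono fun _ _ =>
      ENNReal.tsum_le_tsum fun _ => ofReal_exp_neg_mul_antitone _ h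

end CoverSum

section Packing

variable {X : Type*} [PseudoMetricSpace X] {T : X → X} {t : ℝ} {N n : ℕ} {ε : ℝ} {Y : Set X}

lemma packingMeasureEps_antitone (T : X → X) (ε : ℝ) (Z : Set X) :
    Antitone fun s => packingMeasureEps T s ε Z :=
  fun _ _ h => iInf₂_mono fun _ _ => ENNReal.tsum_le_tsum fun _ => iInf_mono fun _ =>
    iSup₂_mono fun _ _ => iSup₂_mono fun _ _ =>
      ENNReal.tsum_le_tsum fun _ => ofReal_exp_neg_mul_antitone _ h

lemma tsum_le_packingSum {F : Set (X × ℕ)} (hF : F.Countable) (hFY : ∀ p ∈ F, p.1 ∈ Y ∧ N ≤ p.2)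
    (hdisj : F.PairwiseDisjoint fun p => bowenClosedBall T p.2 p.1 ε) :
    ∑' p : F, ENNReal.ofReal (Real.exp (-t * ((p : X × ℕ).2 : ℝ))) ≤ packingSum T t N ε Y :=
  le_iSup₂_of_le F hF <| le_iSup₂_of_le hFY hdisj le_rfl

lemma card_mul_le_packingSum {E : Finset X} (hEY : ↑E ⊆ Y) (hn : N ≤ n)
    (hdisj : (E : Set X).PairwiseDisjoint fun y => bowenClosedBall T n y ε) :
    (E.card : ℝ≥0∞) * ENNReal.ofReal (Real.exp (-t * n)) ≤ packingSum T t N ε Y := by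
  have hinj : InjOn (fun y : X => (y, n)) E := fun _ _ _ _ h => congrArg Prod.fst h
  calc (E.card : ℝ≥0∞) * ENNReal.ofReal (Real.exp (-t * n))
      = ∑' p : (fun y : X => (y, n)) '' E,
          ENNReal.ofReal (Real.exp (-t * ((p : X × ℕ).2 : ℝ))) :=
        by rw [tsum_image_finset_of_forall_eq hinj
          (fun p : X × ℕ => ENNReal.ofReal (Real.exp (-t * p.2)))
          (c := ENNReal.ofReal (Real.exp (-t * n))) fun _ _ => rfl, nsmul_eq_mul]
    _ ≤ packingSum T t N ε Y := by
        refine tsum_le_packingSum (E.countable_toSet.image _)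
          (by rintro _ ⟨y, hy, rfl⟩; exact ⟨hEY hy, hn⟩) ?_
        rintro _ ⟨y, hy, rfl⟩ _ ⟨y', hy', rfl⟩ hne
        exact hdisj hy hy' fun h => hne (h ▸ rfl)

/-- A maximal disjoint family of closed Bowen balls centred in `Y` is finite with at most
`e^{tn}` members by the packing bound, and its doubled balls cover `Y` by maximality. -/
lemma exists_finset_card_mul_le_one_and_subset_bowenClosedBall (hε : 0 ≤ ε)
    (hY : packingSum T t N ε Y < 1) (hn : N ≤ n) :
    ∃ E : Finset X, (E.card : ℝ≥0∞) * ENNReal.ofReal (Real.exp (-t * n)) ≤ 1 ∧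
      Y ⊆ ⋃ y ∈ E, bowenClosedBall T n y (2 * ε) := by
  classical
  set P : Finset X → Prop :=
    fun E => ↑E ⊆ Y ∧ (E : Set X).PairwiseDisjoint fun y => bowenClosedBall T n y ε
  have hpack : ∀ E, P E → (E.card : ℝ≥0∞) * ENNReal.ofReal (Real.exp (-t * n)) ≤ 1 :=
    fun E hE => (card_mul_le_packingSum hE.1 hn hE.2).trans hY.le
  obtain ⟨K, hK⟩ := ENNReal.exists_nat_gt
    (ENNReal.inv_ne_top.2 (ENNReal.ofReal_pos.2 (Real.exp_pos (-t * n))).ne')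
  have hbdd : ∀ E, P E → E.card ≤ K := fun E hE => by
    exact_mod_cast (ENNReal.le_inv_iff_mul_le.2 (hpack E hE)).trans hK.le
  obtain ⟨E, hE, hmax⟩ := Finset.exists_max_card_of_bdd (P := P) (E₀ := ∅) ⟨by simp, by simp⟩ hbdd
  refine ⟨E, hpack E hE, fun z hz => ?_⟩
  obtain ⟨y, hy, hyz⟩ :
      ∃ y ∈ E, ¬Disjoint (bowenClosedBall T n y ε) (bowenClosedBall T n z ε) := by
    by_contra! hdisj
    have hzE : z ∉ E := fun hzE => not_disjoint_iff.2
      ⟨z, mem_bowenClosedBall_self hε, mem_bowenClosedBall_self hε⟩ (hdisj z hzE)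
    have hins : P (insert z E) := by
      refine ⟨?_, ?_⟩ <;> rw [Finset.coe_insert]
      · exact insert_subset hz hE.1
      · exact hE.2.insert fun y hy _ => (hdisj y hy).symm
    have := hmax _ hins
    rw [Finset.card_insert_of_notMem hzE] at this
    omega
  exact mem_biUnion hy (mem_bowenClosedBall_two_mul_of_not_disjoint hyz)

end Packing

section Product

variable {X₁ X₂ : Type*} [PseudoMetricSpace X₁] [PseudoMetricSpace X₂] {T₁ : X₁ → X₁}
  {T₂ : X₂ → X₂} {s t : ℝ} {N : ℕ} {ε : ℝ} {Z₁ : Set X₁} {Y : Set X₂}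

lemma coverSum_prod_le_tsum {F : Set (X₁ × ℕ)} (hF : F.Countable) (hFN : ∀ p ∈ F, N ≤ p.2)
    (hFZ : Z₁ ⊆ ⋃ p ∈ F, bowenBall T₁ p.2 p.1 ε) (E : X₁ × ℕ → Finset X₂)
    (hEcard : ∀ p ∈ F, ((E p).card : ℝ≥0∞) * ENNReal.ofReal (Real.exp (-t * p.2)) ≤ 1)
    (hEY : ∀ p ∈ F, Y ⊆ ⋃ y ∈ E p, bowenBall T₂ p.2 y ε) :
    coverSum (Prod.map T₁ T₂) (s + t) N ε (Z₁ ×ˢ Y) ≤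
      ∑' p : F, ENNReal.ofReal (Real.exp (-s * ((p : X₁ × ℕ).2 : ℝ))) := by
  set pair : X₁ × ℕ → X₂ → (X₁ × X₂) × ℕ := fun p y => ((p.1, y), p.2)
  set G := ⋃ p ∈ F, pair p '' E p
  have hGN : ∀ q ∈ G, N ≤ q.2 := by
    simp only [G, mem_iUnion₂]
    rintro _ ⟨p, hp, y, -, rfl⟩
    exact hFN p hp
  have hGcov : Z₁ ×ˢ Y ⊆ ⋃ q ∈ G, bowenBall (Prod.map T₁ T₂) q.2 q.1 ε := by
    rintro ⟨z₁, z₂⟩ ⟨hz₁, hz₂⟩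
    obtain ⟨p, hp, hzp⟩ := mem_iUnion₂.1 (hFZ hz₁)
    obtain ⟨y, hy, hzy⟩ := mem_iUnion₂.1 (hEY p hp hz₂)
    refine mem_iUnion₂.2 ⟨pair p y, mem_iUnion₂.2 ⟨p, hp, mem_image_of_mem _ hy⟩, ?_⟩
    rw [bowenBall_prodMap]
    exact ⟨hzp, hzy⟩
  have hfiber : ∀ p : F, ∑' q : pair p '' E p,
      ENNReal.ofReal (Real.exp (-(s + t) * ((q : (X₁ × X₂) × ℕ).2 : ℝ))) ≤
        ENNReal.ofReal (Real.exp (-s * ((p : X₁ × ℕ).2 : ℝ))) := by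
    rintro ⟨p, hp⟩
    have hinj : InjOn (pair p) (E p) := fun _ _ _ _ h => congrArg (·.1.2) h
    rw [tsum_image_finset_of_forall_eq hinj
      (fun q : (X₁ × X₂) × ℕ => ENNReal.ofReal (Real.exp (-(s + t) * q.2)))
      (c := ENNReal.ofReal (Real.exp (-(s + t) * p.2))) fun _ _ => rfl,
      nsmul_eq_mul, ofReal_exp_neg_add_mul, ← mul_assoc]
    exact mul_le_of_le_one_left zero_le (hEcard p hp)
  calc coverSum (Prod.map T₁ T₂) (s + t) N ε (Z₁ ×ˢ Y)
      ≤ ∑' q : G, ENNReal.ofReal (Real.exp (-(s + t) * ((q : (X₁ × X₂) × ℕ).2 : ℝ))) :=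
        coverSum_le_tsum (hF.biUnion fun p _ => (E p).countable_toSet.image _) hGN hGcov
    _ ≤ ∑' p : F, ∑' q : pair p '' E p,
          ENNReal.ofReal (Real.exp (-(s + t) * ((q : (X₁ × X₂) × ℕ).2 : ℝ))) :=
        ENNReal.tsum_biUnion_le_tsum
          (fun q : (X₁ × X₂) × ℕ => ENNReal.ofReal (Real.exp (-(s + t) * q.2))) F _
    _ ≤ _ := ENNReal.tsum_le_tsum hfiber

lemma coverSum_prod_eq_zero {M : ℕ} (hε : 0 < ε) (hZ₁ : ∀ N, coverSum T₁ s N ε Z₁ = 0)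
    (hY : packingSum T₂ t M (ε / 3) Y < 1) (N : ℕ) :
    coverSum (Prod.map T₁ T₂) (s + t) N ε (Z₁ ×ˢ Y) = 0 := by
  refine nonpos_iff_eq_zero.1 (ENNReal.le_of_forall_pos_le_add fun η hη _ => ?_)
  obtain ⟨F, hF, hFN, hFZ, hFsum⟩ := exists_cover_of_coverSum_lt (r := η)
    (by rw [hZ₁ (max N M)]; exact_mod_cast hη)
  have hE : ∀ p ∈ F, ∃ E : Finset X₂,
      (E.card : ℝ≥0∞) * ENNReal.ofReal (Real.exp (-t * p.2)) ≤ 1 ∧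
        Y ⊆ ⋃ y ∈ E, bowenBall T₂ p.2 y ε := fun p hp => by
    obtain ⟨E, hcard, hcov⟩ := exists_finset_card_mul_le_one_and_subset_bowenClosedBall
      (by positivity) hY ((le_max_right _ _).trans (hFN p hp))
    exact ⟨E, hcard, hcov.trans <| iUnion₂_mono fun _ _ =>
      bowenClosedBall_subset_bowenBall (by linarith)⟩
  choose! E hEcard hEY using hE
  calc coverSum (Prod.map T₁ T₂) (s + t) N ε (Z₁ ×ˢ Y)
      ≤ ∑' p : F, ENNReal.ofReal (Real.exp (-s * ((p : X₁ × ℕ).2 : ℝ))) :=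
        coverSum_prod_le_tsum hF (fun p hp => (le_max_left _ _).trans (hFN p hp)) hFZ E
          hEcard hEY
    _ ≤ 0 + η := hFsum.le.trans_eq (zero_add _).symm

lemma coverMeasure_prod_eq_zero {Z₂ : Set X₂} (h₁ : coverMeasure T₁ s Z₁ = 0)
    (h₂ : ∀ ε > 0, packingMeasureEps T₂ t ε Z₂ = 0) :
    coverMeasure (Prod.map T₁ T₂) (s + t) (Z₁ ×ˢ Z₂) = 0 := by
  simp only [coverMeasure, coverMeasureEps, ENNReal.iSup_eq_zero] at h₁ ⊢
  intro ε hε N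
  obtain ⟨Ys, hZ₂, hYs⟩ : ∃ Ys : ℕ → Set X₂, Z₂ ⊆ ⋃ i, Ys i ∧
      ∑' i, packingPre T₂ t (ε / 3) (Ys i) < 1 := by
    have h : packingMeasureEps T₂ t (ε / 3) Z₂ < 1 := by
      rw [h₂ (ε / 3) (by positivity)]
      exact one_pos
    simpa only [packingMeasureEps, iInf_lt_iff, exists_prop] using h
  have hpiece : ∀ i, ∃ M, packingSum T₂ t M (ε / 3) (Ys i) < 1 := fun i =>
    iInf_lt_iff.1 ((ENNReal.le_tsum i).trans_lt hYs)
  choose M hM using hpiece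
  refine nonpos_iff_eq_zero.1 ?_
  calc coverSum (Prod.map T₁ T₂) (s + t) N ε (Z₁ ×ˢ Z₂)
      ≤ coverSum (Prod.map T₁ T₂) (s + t) N ε (⋃ i, Z₁ ×ˢ Ys i) :=
        coverSum_mono (prod_iUnion ▸ prod_mono subset_rfl hZ₂)
    _ ≤ ∑' i, coverSum (Prod.map T₁ T₂) (s + t) N ε (Z₁ ×ˢ Ys i) := coverSum_iUnion_le _
    _ = 0 := ENNReal.tsum_eq_zero.2 fun i => coverSum_prod_eq_zero hε (h₁ ε hε) (hM i) N

end Product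

end BowenProduct

theorem BowenProduct.bowenEntropy_prod_le_add_packing₂_general {X₁ X₂ : Type*}
    [MetricSpace X₁] [MetricSpace X₂]
    (T₁ : X₁ → X₁) (T₂ : X₂ → X₂)
    (Z₁ : Set X₁) (Z₂ : Set X₂) :
    BowenProduct.bowenEntropy (Prod.map T₁ T₂) (Z₁ ×ˢ Z₂) ≤
      BowenProduct.bowenEntropy T₁ Z₁ + BowenProduct.packingEntropy T₂ Z₂ := by
  refine ENNReal.le_add_of_forall_coe_lt fun s t hs ht => ?_
  have h₁ : coverMeasure T₁ s Z₁ = 0 :=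
    (coverMeasure_antitone T₁ Z₁).apply_eq_zero_of_iInf_lt hs
  have h₂ : ∀ ε > 0, packingMeasureEps T₂ t ε Z₂ = 0 := fun ε hε =>
    (packingMeasureEps_antitone T₂ ε Z₂).apply_eq_zero_of_iInf_lt <|
      (le_iSup₂ (f := fun ε (_ : 0 < ε) => packingEntropyEps T₂ ε Z₂) ε hε).trans_lt ht
  have hprod : coverMeasure (Prod.map T₁ T₂) ((s + t : ℝ≥0) : ℝ) (Z₁ ×ˢ Z₂) = 0 := by
    rw [NNReal.coe_add]
    exact coverMeasure_prod_eq_zero h₁ h₂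
  calc bowenEntropy (Prod.map T₁ T₂) (Z₁ ×ˢ Z₂) ≤ ((s + t : ℝ≥0) : ℝ≥0∞) :=
        iInf₂_le (s + t) hprod
    _ = s + t := ENNReal.coe_add s t

/-- Upper bound for Bowen entropy of a product of two different systems:
`h^B(Z_1 × Z_2) ≤ h^B(Z_1) + h^P(Z_2)` in the system `(X_1 × X_2, ρ, T_1 × T_2)` with `ρ`
the max product metric. -/
theorem BowenProduct.bowenEntropy_prod_le_add_packing₂ {X₁ X₂ : Type*}
    [MetricSpace X₁] [CompactSpace X₁] [MetricSpace X₂] [CompactSpace X₂]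
    (T₁ : X₁ → X₁) (hT₁ : Continuous T₁) (T₂ : X₂ → X₂) (hT₂ : Continuous T₂)
    (Z₁ : Set X₁) (Z₂ : Set X₂) :
    BowenProduct.bowenEntropy (Prod.map T₁ T₂) (Z₁ ×ˢ Z₂) ≤
      BowenProduct.bowenEntropy T₁ Z₁ + BowenProduct.packingEntropy T₂ Z₂ :=
  BowenProduct.bowenEntropy_prod_le_add_packing₂_general T₁ T₂ Z₁ Z₂
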